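/- Let M be an abelian group and σ an automorphism of M such that every element of M is fixed by some positive power of σ (i.e., for every x ∈ M there exists r ≥ 1 with σ^r x = x). Let M' = {x ∈ M : there exists n ≥ 1 with (1 + σ + ⋯ + σ^{n-1})x = 0}. Then (σ−1)M ⊆ M', and the image of M' in the quotient M/(σ−1)M is exactly the torsion subgroup of M/(σ−1)M; that is, M'/(σ−1)M = (M/(σ−1)M)_{tors}. -/

import Mathlib

/-!
Write `N_n = 1 + σ + ⋯ + σ^{n-1}`. Since `σ^i x ≡ x` modulo `(σ-1)M`, we have
`N_n x ≡ n • x`, so `N_n x = 0` makes the class of `x` `n`-torsion. Conversely, `N_n` telescopes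
on `(σ-1)M` to `N_n (σ y - y) = σ^n y - y`; if `m • x = σ y - y` and `R` is a common period
of `x` and `y`, then `N_{mR} x = m • N_R x = N_R (σ y - y) = 0`.
-/

/-- The subgroup `(σ−1)M = {σy − y : y ∈ M}` of `M`, i.e. the range of the endomorphism
`σ − 1` of `M`. -/
def sigmaSubOneRange (M : Type) [AddCommGroup M] (σ : AddAut M) : AddSubgroup M :=
  (σ.toAddMonoidHom - AddMonoidHom.id M).range

/-- The set `M' = {x ∈ M | ∃ n ≥ 1, (1 + σ + ⋯ + σ^{n-1}) x = 0}`. -/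
def normKilled (M : Type) [AddCommGroup M] (σ : AddAut M) : Set M :=
  {x | ∃ n : ℕ, 1 ≤ n ∧ ∑ i ∈ Finset.range n, (i • σ) x = 0}

open Finset

namespace AddAut

variable {M : Type} [AddCommGroup M] (σ : AddAut M)

theorem coe_nsmul (n : ℕ) : ⇑(n • σ) = (⇑σ)^[n] := by
  induction n with
  | zero => rfl
  | succ n ih => rw [succ_nsmul', Function.iterate_succ', ← ih]; rfl

/-- `1 + σ + ⋯ + σ^{n-1}`; the group law of `AddAut M` is written additively, so `σ^i` is `i • σ`. -/
def partialNorm (n : ℕ) : M →+ M :=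
  ∑ i ∈ range n, (i • σ).toAddMonoidHom

theorem partialNorm_apply (n : ℕ) (x : M) :
    partialNorm σ n x = ∑ i ∈ range n, (i • σ) x :=
  AddMonoidHom.finsetSum_apply _ _ _

theorem partialNorm_apply_sub (n : ℕ) (y : M) :
    partialNorm σ n (σ y - y) = (n • σ) y - y := by
  rw [partialNorm_apply]
  simpa [map_sub, ← AddAut.add_apply, ← succ_nsmul] using
    sum_range_sub (fun i => (i • σ) y) n

theorem nsmul_apply_eq_of_dvd {r n : ℕ} {x : M} (hx : (r • σ) x = x) (hrn : r ∣ n) :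
    (n • σ) x = x := by
  rw [coe_nsmul] at hx ⊢
  exact Function.IsPeriodicPt.trans_dvd hx hrn

theorem partialNorm_mul_apply_of_apply_eq {r : ℕ} {x : M} (hx : (r • σ) x = x) (k : ℕ) :
    partialNorm σ (k * r) x = k • partialNorm σ r x := by
  induction k with
  | zero => simp [partialNorm]
  | succ k ih =>
    have hkr : ((k * r) • σ) x = x := nsmul_apply_eq_of_dvd σ hx (dvd_mul_left r k)
    rw [Nat.succ_mul, succ_nsmul, ← ih]
    simp only [partialNorm_apply]
    rw [sum_range_add]
    congr 1
    refine sum_congr rfl fun i _ => ?_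
    rw [add_comm, add_nsmul, AddAut.add_apply, hkr]

end AddAut

open AddAut

section

variable {M : Type} [AddCommGroup M] (σ : AddAut M)

theorem mem_sigmaSubOneRange {x : M} : x ∈ sigmaSubOneRange M σ ↔ ∃ y, σ y - y = x := by
  simp [sigmaSubOneRange, AddMonoidHom.mem_range, AddMonoidHom.sub_apply]

theorem mem_normKilled {x : M} : x ∈ normKilled M σ ↔ ∃ n, 1 ≤ n ∧ partialNorm σ n x = 0 := by
  simp [normKilled, partialNorm_apply]

theorem nsmul_apply_sub_self_mem_sigmaSubOneRange (n : ℕ) (x : M) :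
    (n • σ) x - x ∈ sigmaSubOneRange M σ := by
  induction n with
  | zero => simp
  | succ n ih =>
    have hstep : σ ((n • σ) x) - (n • σ) x ∈ sigmaSubOneRange M σ :=
      (mem_sigmaSubOneRange σ).2 ⟨_, rfl⟩
    simpa [succ_nsmul', AddAut.add_apply] using add_mem hstep ih

theorem nsmul_sub_partialNorm_mem_sigmaSubOneRange (n : ℕ) (x : M) :
    n • x - partialNorm σ n x ∈ sigmaSubOneRange M σ := by
  have h : n • x - partialNorm σ n x = -∑ i ∈ range n, ((i • σ) x - x) := by
    simp [partialNorm_apply, sum_sub_distrib]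
  rw [h]
  exact neg_mem (sum_mem fun i _ => nsmul_apply_sub_self_mem_sigmaSubOneRange σ i x)

theorem isOfFinAddOrder_mk_of_mem_normKilled {x : M} (hx : x ∈ normKilled M σ) :
    IsOfFinAddOrder (QuotientAddGroup.mk x : M ⧸ sigmaSubOneRange M σ) := by
  obtain ⟨n, hn, hNx⟩ := (mem_normKilled σ).1 hx
  refine isOfFinAddOrder_iff_nsmul_eq_zero.2 ⟨n, hn, ?_⟩
  rw [← QuotientAddGroup.mk_nsmul, QuotientAddGroup.eq_zero_iff]
  simpa [hNx] using nsmul_sub_partialNorm_mem_sigmaSubOneRange σ n x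

theorem mem_normKilled_of_nsmul_mem_sigmaSubOneRange
    (h : ∀ x : M, ∃ r : ℕ, 1 ≤ r ∧ (r • σ) x = x) {x : M} {m : ℕ} (hm : 1 ≤ m)
    (hmx : m • x ∈ sigmaSubOneRange M σ) : x ∈ normKilled M σ := by
  obtain ⟨y, hy⟩ := (mem_sigmaSubOneRange σ).1 hmx
  obtain ⟨r, hr, hrx⟩ := h x
  obtain ⟨s, hs, hsy⟩ := h y
  have hRx : ((r * s) • σ) x = x := nsmul_apply_eq_of_dvd σ hrx (dvd_mul_right r s)
  have hRy : ((r * s) • σ) y = y := nsmul_apply_eq_of_dvd σ hsy (dvd_mul_left s r)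
  refine (mem_normKilled σ).2 ⟨m * (r * s), Nat.mul_pos hm (Nat.mul_pos hr hs), ?_⟩
  rw [partialNorm_mul_apply_of_apply_eq σ hRx, ← map_nsmul, ← hy, partialNorm_apply_sub, hRy,
    sub_self]

end

theorem normKilled_image_eq_torsion (M : Type) [AddCommGroup M] (σ : AddAut M)
    (h : ∀ x : M, ∃ r : ℕ, 1 ≤ r ∧ (r • σ) x = x) :
    (∀ y : M, σ y - y ∈ normKilled M σ) ∧
    QuotientAddGroup.mk '' normKilled M σ =
      {x : M ⧸ sigmaSubOneRange M σ | IsOfFinAddOrder x} := by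
  refine ⟨fun y => ?_, ?_⟩
  · obtain ⟨r, hr, hry⟩ := h y
    exact (mem_normKilled σ).2 ⟨r, hr, by rw [partialNorm_apply_sub, hry, sub_self]⟩
  · refine Set.Subset.antisymm ?_ fun q hq => ?_
    · rintro _ ⟨x, hx, rfl⟩
      exact isOfFinAddOrder_mk_of_mem_normKilled σ hx
    · obtain ⟨x, rfl⟩ := QuotientAddGroup.mk_surjective q
      obtain ⟨m, hm, hmx⟩ := isOfFinAddOrder_iff_nsmul_eq_zero.1 hq
      rw [← QuotientAddGroup.mk_nsmul, QuotientAddGroup.eq_zero_iff] at hmx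
      exact ⟨x, mem_normKilled_of_nsmul_mem_sigmaSubOneRange σ h hm hmx, rfl⟩
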